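/- Let B be the simple graph on vertex set (ZMod 5) × (ZMod 5) in which (a, i) is adjacent to (b, j) if and only if b - a ∈ {1, -1} in ZMod 5. For each pair (d, i) ∈ (ZMod 5) × (ZMod 5), the closed walk through the five vertices (k, i + d·k) for k = 0, 1, 2, 3, 4 (in this cyclic order) is a cycle of length 5 in B, and the edge sets of these 25 cycles partition the edge set of B. -/

import Mathlib

/-! Every edge of the graph joins a vertex `(a, x)` to a vertex `(a + 1, y)`, and this orientation
is unambiguous because `1 ≠ -1` in `ZMod 5`. Such an edge is the `a`-th step of the walk with
slope `d = y - x` through `(a, x)`, and the step determines both `d` and the offset `i`, so each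
edge lies on exactly one of the 25 walks. -/

open SimpleGraph

/-- The 5-blowup of the 5-cycle: `(a, i)` is adjacent to `(b, j)` iff
`b - a ∈ {1, -1}` in `ZMod 5`. -/
def blowupC5 : SimpleGraph (ZMod 5 × ZMod 5) where
  Adj u v := v.1 - u.1 = 1 ∨ v.1 - u.1 = -1
  symm := by
    constructor
    intro u v h
    rcases h with h | h
    · right
      rw [← neg_sub, h]
    · left
      rw [← neg_sub, h, neg_neg]
  loopless := by
    constructor
    intro u h
    simp only [sub_self] at h
    rcases h with h | h <;> exact absurd h (by decide)

/-- The `k`-th vertex of the base cycle with parameters `(d, i)`. -/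
def vtx (d i k : ZMod 5) : ZMod 5 × ZMod 5 := (k, i + d * k)

lemma adj_step (d i k : ZMod 5) : blowupC5.Adj (vtx d i k) (vtx d i (k + 1)) :=
  Or.inl (by show (k + 1) - k = 1; ring)

lemma adj_last (d i : ZMod 5) : blowupC5.Adj (vtx d i 4) (vtx d i 0) :=
  Or.inl (by show (0 : ZMod 5) - 4 = 1; decide)

/-- The closed walk through the five vertices `(k, i + d*k)`, `k = 0,…,4`. -/
def baseWalk (d i : ZMod 5) : blowupC5.Walk (vtx d i 0) (vtx d i 0) :=
  .cons (adj_step d i 0) (.cons (adj_step d i 1) (.cons (adj_step d i 2)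
    (.cons (adj_step d i 3) (.cons (adj_last d i) .nil))))

lemma baseWalk_edges (d i : ZMod 5) : (baseWalk d i).edges =
    [0, 1, 2, 3, 4].map fun k => s(vtx d i k, vtx d i (k + 1)) := by
  revert d i; decide

lemma baseWalk_isCycle (d i : ZMod 5) : (baseWalk d i).IsCycle := by
  rw [Walk.isCycle_def, Walk.isTrail_def]
  refine ⟨?_, nofun, ?_⟩ <;> revert d i <;> decide

lemma mem_baseWalk_edges {d i : ZMod 5} {e : Sym2 (ZMod 5 × ZMod 5)} :
    e ∈ (baseWalk d i).edges ↔ ∃ k, s(vtx d i k, vtx d i (k + 1)) = e := by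
  have mem_list (k : ZMod 5) : k ∈ [0, 1, 2, 3, 4] := by revert k; decide
  rw [baseWalk_edges, List.mem_map]
  exact ⟨fun ⟨k, _, h⟩ => ⟨k, h⟩, fun ⟨k, h⟩ => ⟨k, mem_list k, h⟩⟩

lemma step_edge_mem_baseWalk (a x y : ZMod 5) :
    s((a, x), (a + 1, y)) ∈ (baseWalk (y - x) (x - (y - x) * a)).edges :=
  mem_baseWalk_edges.2 ⟨a, by simp only [vtx]; congr 2 <;> ring⟩

lemma eq_of_step_edge_eq {d i k d' i' k' : ZMod 5}
    (h : s(vtx d i k, vtx d i (k + 1)) = s(vtx d' i' k', vtx d' i' (k' + 1))) :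
    d = d' ∧ i = i' := by
  simp only [Sym2.eq_iff, vtx, Prod.ext_iff] at h
  rcases h with ⟨⟨rfl, hx⟩, -, hy⟩ | ⟨⟨hk, -⟩, hk', -⟩
  · have hd : d = d' := by linear_combination hy - hx
    exact ⟨hd, by linear_combination hx - k * hd⟩
  · exact absurd (by linear_combination hk' - hk : (2 : ZMod 5) = 0) (by decide)

lemma baseWalk_eq_of_mem_edges {d i d' i' : ZMod 5} {e : Sym2 (ZMod 5 × ZMod 5)}
    (h : e ∈ (baseWalk d i).edges) (h' : e ∈ (baseWalk d' i').edges) : d = d' ∧ i = i' := by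
  obtain ⟨k, rfl⟩ := mem_baseWalk_edges.1 h
  obtain ⟨k', hk'⟩ := mem_baseWalk_edges.1 h'
  exact eq_of_step_edge_eq hk'.symm

lemma exists_baseWalk_of_adj {u v : ZMod 5 × ZMod 5} (h : blowupC5.Adj u v) :
    ∃ p : ZMod 5 × ZMod 5, s(u, v) ∈ (baseWalk p.1 p.2).edges := by
  obtain ⟨a, x⟩ := u
  obtain ⟨b, y⟩ := v
  change b - a = 1 ∨ b - a = -1 at h
  rcases h with h | h
  · obtain rfl : b = a + 1 := by linear_combination h
    exact ⟨(y - x, x - (y - x) * a), step_edge_mem_baseWalk a x y⟩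
  · obtain rfl : a = b + 1 := by linear_combination -h
    exact ⟨(x - y, y - (x - y) * b), Sym2.eq_swap ▸ step_edge_mem_baseWalk b y x⟩

theorem stmt_6 :
    (∀ d i : ZMod 5, (baseWalk d i).IsCycle ∧ (baseWalk d i).length = 5) ∧
    (∀ p q : ZMod 5 × ZMod 5, p ≠ q →
      Disjoint {e | e ∈ (baseWalk p.1 p.2).edges} {e | e ∈ (baseWalk q.1 q.2).edges}) ∧
    (⋃ p : ZMod 5 × ZMod 5, {e | e ∈ (baseWalk p.1 p.2).edges}) = blowupC5.edgeSet := by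
  refine ⟨fun d i => ⟨baseWalk_isCycle d i, rfl⟩, fun p q hpq => ?_, ?_⟩
  · refine Set.disjoint_left.2 fun e hp hq => hpq ?_
    obtain ⟨hd, hi⟩ := baseWalk_eq_of_mem_edges hp hq
    exact Prod.ext hd hi
  · refine Set.Subset.antisymm (Set.iUnion_subset fun p => (baseWalk p.1 p.2).edges_subset_edgeSet)
      fun e he => ?_
    induction e using Sym2.ind with
    | _ u v => simpa using exists_baseWalk_of_adj he
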